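/- arXiv:1001.3426 — 2 statements merged into one kernel-verified Lean document; each statement's English description precedes it below -/
import Mathlib

section
/- Let T > 0, let u : [0,T] × ℝ³ → ℝ³ and F : [0,T] × ℝ³ → M³ˣ³(ℝ) be twice continuously differentiable, and suppose that pointwise ∂_t F_{ij} + Σ_k u_k ∂_k F_{ij} = Σ_m (∂_m u_i) F_{mj} for all i,j. Define Q_{ijk} := Σ_l ( F_{lk} ∂_l F_{ij} − F_{lj} ∂_l F_{ik} ). Then pointwise on [0,T] × ℝ³, for all indices i,j,k: ∂_t Q_{ijk} + Σ_m u_m ∂_m Q_{ijk} = Σ_m (∂_m u_i) Q_{mjk}. -/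
/-- Spatial partial derivative `∂_i f` of a scalar field on `ℝ³`. -/
noncomputable def pd (i : Fin 3) (f : (Fin 3 → ℝ) → ℝ) (x : Fin 3 → ℝ) : ℝ :=
  fderiv ℝ f x (Pi.single i 1)

/-- The curl-type quantity `Q_{ijk} = Σ_l (F_{lk} ∂_l F_{ij} − F_{lj} ∂_l F_{ik})`. -/
noncomputable def Qc (F : ℝ → (Fin 3 → ℝ) → Fin 3 → Fin 3 → ℝ)
    (t : ℝ) (x : Fin 3 → ℝ) (i j k : Fin 3) : ℝ :=
  ∑ l, (F t x l k * pd l (fun y => F t y i j) x - F t x l j * pd l (fun y => F t y i k) x)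

/-! On spacetime `ℝ × ℝ³` let `U = ∂_t + u·∇` and let `X_k = Σ_l F_{lk} ∂_l` be the spatial field
given by the `k`-th column of `F`. The transport equation says exactly that `[U, X_k] = 0` on the
time slice `{t} × ℝ³`, and `[X_k, X_j]` is the spatial field with components `Q_{·jk}`, for which
the claimed equation reads `[U, [X_k, X_j]] = 0`. This follows from the Jacobi identity
`[U, [X_k, X_j]] = [[U, X_k], X_j] + [X_k, [U, X_j]]`: both brackets `[U, X_·]` vanish on the whole
slice, and `X_j`, `X_k` are tangent to it. -/

open VectorField Function

section ProdVectorField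

variable {𝕜 : Type*} [NontriviallyNormedField 𝕜]
  {E₁ E₂ G : Type*} [NormedAddCommGroup E₁] [NormedSpace 𝕜 E₁]
  [NormedAddCommGroup E₂] [NormedSpace 𝕜 E₂] [NormedAddCommGroup G] [NormedSpace 𝕜 G]

lemma fderiv_apply_zero_prod_eq_zero_of_forall_eq_zero {f : E₁ × E₂ → G} {a : E₁}
    (hf : ∀ y, f (a, y) = 0) (x v : E₂) : fderiv 𝕜 f (a, x) (0, v) = 0 := by
  by_cases hd : DifferentiableAt 𝕜 f (a, x)
  · have hslice : HasFDerivAt (fun y => f (a, y))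
        ((fderiv 𝕜 f (a, x)).comp (.inr 𝕜 E₁ E₂)) x :=
      hd.hasFDerivAt.comp x (hasFDerivAt_prodMk_right a x)
    simp only [hf] at hslice
    simpa using congrArg (· v) (hslice.unique (hasFDerivAt_const 0 x))
  · simp [fderiv_zero_of_not_differentiableAt hd]

lemma lieBracket_prodMk_const {V W : E₁ × E₂ → E₂} {p : E₁ × E₂} (c d : E₁)
    (hV : DifferentiableAt 𝕜 V p) (hW : DifferentiableAt 𝕜 W p) :
    lieBracket 𝕜 (fun q => (c, V q)) (fun q => (d, W q)) p
      = (0, fderiv 𝕜 W p (c, V p) - fderiv 𝕜 V p (d, W p)) := by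
  rw [lieBracket, ((hasFDerivAt_const c p).prodMk hV.hasFDerivAt).fderiv,
    ((hasFDerivAt_const d p).prodMk hW.hasFDerivAt).fderiv]
  simp

lemma lieBracket_lieBracket_eq_zero_of_forall_lieBracket_eq_zero {n : WithTop ℕ∞}
    (hn : minSmoothness 𝕜 2 ≤ n) {U V W : E₁ × E₂ → E₁ × E₂} {a : E₁} {x : E₂}
    (hU : ContDiffAt 𝕜 n U (a, x)) (hV : ContDiffAt 𝕜 n V (a, x)) (hW : ContDiffAt 𝕜 n W (a, x))
    (hUV : ∀ y, lieBracket 𝕜 U V (a, y) = 0) (hUW : ∀ y, lieBracket 𝕜 U W (a, y) = 0)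
    (hV₁ : (V (a, x)).1 = 0) (hW₁ : (W (a, x)).1 = 0) :
    lieBracket 𝕜 U (lieBracket 𝕜 V W) (a, x) = 0 := by
  have hVx : V (a, x) = (0, (V (a, x)).2) := Prod.ext hV₁ rfl
  have hWx : W (a, x) = (0, (W (a, x)).2) := Prod.ext hW₁ rfl
  have hUVW : lieBracket 𝕜 (lieBracket 𝕜 U V) W (a, x) = 0 := by
    rw [lieBracket, hUV, hWx, fderiv_apply_zero_prod_eq_zero_of_forall_eq_zero hUV]
    simp
  have hVUW : lieBracket 𝕜 V (lieBracket 𝕜 U W) (a, x) = 0 := by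
    rw [lieBracket, hUW, hVx, fderiv_apply_zero_prod_eq_zero_of_forall_eq_zero hUW]
    simp
  rw [leibniz_identity_lieBracket hn hU hV hW, hUVW, hVUW, add_zero]

end ProdVectorField

section Coordinates

variable {f : ℝ → (Fin 3 → ℝ) → ℝ} {t : ℝ} {x : Fin 3 → ℝ}

lemma sum_mul_pd_eq_fderiv (hf : DifferentiableAt ℝ (uncurry f) (t, x)) (w : Fin 3 → ℝ) :
    ∑ l, w l * pd l (f t) x = fderiv ℝ (uncurry f) (t, x) (0, w) := by
  have hslice : HasFDerivAt (f t) ((fderiv ℝ (uncurry f) (t, x)).comp (.inr ℝ ℝ _)) x :=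
    hf.hasFDerivAt.comp x (hasFDerivAt_prodMk_right t x)
  have hw : ((0 : ℝ), w) = ∑ l, w l • ((0 : ℝ), (Pi.single l 1 : Fin 3 → ℝ)) := by
    ext <;> simp [Prod.fst_sum, Prod.snd_sum, Pi.single_apply]
  simp only [pd, hslice.fderiv, hw, map_sum, map_smul, smul_eq_mul,
    ContinuousLinearMap.comp_apply, ContinuousLinearMap.inr_apply]

lemma deriv_add_sum_mul_pd_eq_fderiv (hf : DifferentiableAt ℝ (uncurry f) (t, x))
    (w : Fin 3 → ℝ) :
    deriv (fun s => f s x) t + ∑ l, w l * pd l (f t) x = fderiv ℝ (uncurry f) (t, x) (1, w) := by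
  have htime : HasDerivAt (fun s => f s x) (fderiv ℝ (uncurry f) (t, x) (1, 0)) t := by
    simpa [Function.comp_def] using
      (hf.hasFDerivAt.comp t (hasFDerivAt_prodMk_left t x)).hasDerivAt
  rw [htime.deriv, sum_mul_pd_eq_fderiv hf, ← map_add, Prod.mk_add_mk, add_zero, zero_add]

end Coordinates

/-- With `c = 1` and `V = u` this is the generator `∂_t + u·∇` of the material derivative;
with `c = 0` it is a purely spatial field. -/
noncomputable def spacetimeField (c : ℝ) (V : ℝ → (Fin 3 → ℝ) → Fin 3 → ℝ) :
    ℝ × (Fin 3 → ℝ) → ℝ × (Fin 3 → ℝ) :=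
  fun p => (c, uncurry V p)

section SpacetimeField

variable {V W : ℝ → (Fin 3 → ℝ) → Fin 3 → ℝ} {t : ℝ} {x : Fin 3 → ℝ}

lemma contDiff_spacetimeField {n : WithTop ℕ∞} (c : ℝ) (hV : ContDiff ℝ n (uncurry V)) :
    ContDiff ℝ n (spacetimeField c V) :=
  contDiff_const.prodMk hV

lemma lieBracket_spacetimeField (c d : ℝ) (hV : DifferentiableAt ℝ (uncurry V) (t, x))
    (hW : DifferentiableAt ℝ (uncurry W) (t, x)) :
    lieBracket ℝ (spacetimeField c V) (spacetimeField d W) (t, x)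
      = (0, fun i => fderiv ℝ (uncurry fun s y => W s y i) (t, x) (c, V t x)
          - fderiv ℝ (uncurry fun s y => V s y i) (t, x) (d, W t x)) := by
  refine (lieBracket_prodMk_const c d hV hW).trans ?_
  congr 1
  funext i
  change _ = fderiv ℝ (fun q => uncurry W q i) (t, x) (c, V t x)
    - fderiv ℝ (fun q => uncurry V q i) (t, x) (d, W t x)
  rw [fderiv_apply hW i, fderiv_apply hV i]
  rfl

lemma lieBracket_spacetimeField_one_zero (hV : DifferentiableAt ℝ (uncurry V) (t, x))
    (hW : DifferentiableAt ℝ (uncurry W) (t, x)) :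
    lieBracket ℝ (spacetimeField 1 V) (spacetimeField 0 W) (t, x)
      = (0, fun i => deriv (fun s => W s x i) t + ∑ m, V t x m * pd m (fun y => W t y i) x
          - ∑ m, pd m (fun y => V t y i) x * W t x m) := by
  rw [lieBracket_spacetimeField 1 0 hV hW]
  congr 2
  funext i
  rw [deriv_add_sum_mul_pd_eq_fderiv (f := fun s y => W s y i) (differentiableAt_pi.1 hW i)]
  simp_rw [mul_comm (pd _ _ _)]
  rw [sum_mul_pd_eq_fderiv (f := fun s y => V s y i) (differentiableAt_pi.1 hV i)]

lemma lieBracket_spacetimeField_zero_zero (hV : DifferentiableAt ℝ (uncurry V) (t, x))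
    (hW : DifferentiableAt ℝ (uncurry W) (t, x)) :
    lieBracket ℝ (spacetimeField 0 V) (spacetimeField 0 W) (t, x)
      = (0, fun i => ∑ m, V t x m * pd m (fun y => W t y i) x
          - ∑ m, W t x m * pd m (fun y => V t y i) x) := by
  rw [lieBracket_spacetimeField 0 0 hV hW]
  congr 2
  funext i
  rw [sum_mul_pd_eq_fderiv (f := fun s y => W s y i) (differentiableAt_pi.1 hW i),
    sum_mul_pd_eq_fderiv (f := fun s y => V s y i) (differentiableAt_pi.1 hV i)]

end SpacetimeField

lemma lieBracket_columns_eq_spacetimeField_Qc {F : ℝ → (Fin 3 → ℝ) → Fin 3 → Fin 3 → ℝ}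
    (hF : Differentiable ℝ (uncurry F)) (j k : Fin 3) :
    lieBracket ℝ (spacetimeField 0 fun s y l => F s y l k) (spacetimeField 0 fun s y l => F s y l j)
      = spacetimeField 0 fun s y i => Qc F s y i j k := by
  have hcol : ∀ k, Differentiable ℝ (uncurry fun s y l => F s y l k) := fun k =>
    differentiable_pi.2 fun l => differentiable_pi.1 (differentiable_pi.1 hF l) k
  funext ⟨t, x⟩
  rw [lieBracket_spacetimeField_zero_zero (hcol k _) (hcol j _)]
  simp [spacetimeField, Qc, Finset.sum_sub_distrib]

theorem transport_equation_for_curl_quantity_general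
    (T : ℝ)
    (u : ℝ → (Fin 3 → ℝ) → Fin 3 → ℝ)
    (F : ℝ → (Fin 3 → ℝ) → Fin 3 → Fin 3 → ℝ)
    (hu : ContDiff ℝ 2 (Function.uncurry u))
    (hF : ContDiff ℝ 2 (Function.uncurry F))
    (heq : ∀ t ∈ Set.Icc (0 : ℝ) T, ∀ x : Fin 3 → ℝ, ∀ i j : Fin 3,
      deriv (fun s => F s x i j) t + ∑ k, u t x k * pd k (fun y => F t y i j) x
        = ∑ m, pd m (fun y => u t y i) x * F t x m j) :
    ∀ t ∈ Set.Icc (0 : ℝ) T, ∀ x : Fin 3 → ℝ, ∀ i j k : Fin 3,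
      deriv (fun s => Qc F s x i j k) t + ∑ m, u t x m * pd m (fun y => Qc F t y i j k) x
        = ∑ m, pd m (fun y => u t y i) x * Qc F t x m j k := by
  intro t ht x i j k
  have hcol : ∀ k, ContDiff ℝ 2 (uncurry fun s y l => F s y l k) := fun k =>
    contDiff_pi.2 fun l => contDiff_pi.1 (contDiff_pi.1 hF l) k
  have hflow : ∀ k y, lieBracket ℝ (spacetimeField 1 u)
      (spacetimeField 0 fun s y l => F s y l k) (t, y) = 0 := fun k y => by
    rw [lieBracket_spacetimeField_one_zero (hu.differentiable two_ne_zero _)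
      ((hcol k).differentiable two_ne_zero _)]
    ext m
    · rfl
    · exact sub_eq_zero.2 (heq t ht y m k)
  have hQ := lieBracket_lieBracket_eq_zero_of_forall_lieBracket_eq_zero (x := x) (by simp)
    (contDiff_spacetimeField 1 hu).contDiffAt (contDiff_spacetimeField 0 (hcol k)).contDiffAt
    (contDiff_spacetimeField 0 (hcol j)).contDiffAt (hflow k) (hflow j) rfl rfl
  have hQc : ContDiff ℝ 1 (uncurry fun s y i => Qc F s y i j k) := by
    have h := (contDiff_spacetimeField 0 (hcol k)).lieBracket_vectorField
      (contDiff_spacetimeField 0 (hcol j)) (m := 1) (by norm_num)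
    rw [lieBracket_columns_eq_spacetimeField_Qc (hF.differentiable two_ne_zero)] at h
    exact contDiff_snd.comp h
  rw [lieBracket_columns_eq_spacetimeField_Qc (hF.differentiable two_ne_zero),
    lieBracket_spacetimeField_one_zero (hu.differentiable two_ne_zero _)
      (hQc.differentiable one_ne_zero _)] at hQ
  exact sub_eq_zero.1 (congrFun (congrArg Prod.snd hQ) i)

/-- If `F` solves the transport equation `∂_t F + u·∇F = ∇u F`, then the quantity
`Q_{ijk} = Σ_l (F_{lk} ∂_l F_{ij} − F_{lj} ∂_l F_{ik})` satisfies
`∂_t Q_{ijk} + u·∇ Q_{ijk} = Σ_m (∂_m u_i) Q_{mjk}`. -/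
theorem transport_equation_for_curl_quantity
    (T : ℝ) (hT : 0 < T)
    (u : ℝ → (Fin 3 → ℝ) → Fin 3 → ℝ)
    (F : ℝ → (Fin 3 → ℝ) → Fin 3 → Fin 3 → ℝ)
    (hu : ContDiff ℝ 2 (Function.uncurry u))
    (hF : ContDiff ℝ 2 (Function.uncurry F))
    (heq : ∀ t ∈ Set.Icc (0 : ℝ) T, ∀ x : Fin 3 → ℝ, ∀ i j : Fin 3,
      deriv (fun s => F s x i j) t + ∑ k, u t x k * pd k (fun y => F t y i j) x
        = ∑ m, pd m (fun y => u t y i) x * F t x m j) :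
    ∀ t ∈ Set.Icc (0 : ℝ) T, ∀ x : Fin 3 → ℝ, ∀ i j k : Fin 3,
      deriv (fun s => Qc F s x i j k) t + ∑ m, u t x m * pd m (fun y => Qc F t y i j k) x
        = ∑ m, pd m (fun y => u t y i) x * Qc F t x m j k :=
  transport_equation_for_curl_quantity_general T u F hu hF heq
end

section
/- Let T > 0 and let ρ : [0,T] × ℝ³ → ℝ, u : [0,T] × ℝ³ → ℝ³, E : [0,T] × ℝ³ → M³ˣ³(ℝ) be continuously differentiable with ρ bounded, satisfying pointwise the continuity equation ∂_t ρ + div(ρu) = 0, the equation ∂_t E + u·∇E = ∇u E + ∇u, and the constraint div(ρ(I+E)ᵀ) = 0, i.e. Σ_j ∂_j(ρ(δ_{ij} + E_{ji})) = 0 for each i and all (t,x). Suppose there is a compact set K ⊂ ℝ³ such that u(t,·) and E(t,·) vanish outside K for every t ∈ [0,T]. Then for every t ∈ [0,T]: ∫_{ℝ³} ρ(t,x) tr E(t,x) dx = ∫_{ℝ³} ρ(0,x) tr E(0,x) dx. -/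
/-!
The continuity equation, the equation for `E` and the constraint `div(ρ(I+E)ᵀ) = 0` combine
into the local conservation law `∂ₜ(ρ tr E) = div(ρ((I+E)u - (tr E)u))`. Indeed, inserting the
first two equations gives `∂ₜ(ρ tr E) = -div(ρ (tr E) u) + ρ div u + ρ tr(∇u E)`, and the last
two terms equal `div(ρ(I+E)u) - u · div(ρ(I+E)ᵀ) = div(ρ(I+E)u)`. The flux has compact support
in space, so the spatial integral of its divergence is zero. Differentiating under the integral
sign, `t ↦ ∫ ρ tr E dx` has zero derivative on `(0, T)` and is continuous on `[0, T]`, hence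
constant.
-/

open MeasureTheory

open Set Filter Topology

lemma ContDiff.of_uncurry_left {F G H : Type*} [NormedAddCommGroup F] [NormedSpace ℝ F]
    [NormedAddCommGroup G] [NormedSpace ℝ G] [NormedAddCommGroup H] [NormedSpace ℝ H]
    {n : WithTop ℕ∞} {f : F → G → H} (h : ContDiff ℝ n (Function.uncurry f)) (t : F) :
    ContDiff ℝ n (f t) :=
  h.comp (contDiff_prodMk_right t)

lemma exists_norm_le_indicator {X : Type*} [TopologicalSpace X] {g : ℝ × X → ℝ}
    (hg : Continuous g) {S : Set ℝ} (hS : IsCompact S) {K : Set X} (hK : IsCompact K)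
    (h : ∀ s ∈ S, ∀ x ∉ K, g (s, x) = 0) :
    ∃ C, ∀ s ∈ S, ∀ x, ‖g (s, x)‖ ≤ K.indicator (fun _ => C) x := by
  obtain ⟨C, hC⟩ := (hS.prod hK).exists_bound_of_continuousOn hg.continuousOn
  refine ⟨C, fun s hs x => ?_⟩
  by_cases hx : x ∈ K
  · simpa [indicator_of_mem hx] using hC (s, x) ⟨hs, hx⟩
  · simp [indicator_of_notMem hx, h s hs x hx]

lemma continuousOn_integral_of_forall_notMem_eq_zero {X : Type*} [TopologicalSpace X]
    [T2Space X] [MeasurableSpace X] [OpensMeasurableSpace X] {μ : Measure X}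
    [IsFiniteMeasureOnCompacts μ] {Φ : ℝ × X → ℝ} (hΦ : Continuous Φ) {K : Set X}
    (hK : IsCompact K) {a b : ℝ} (hvan : ∀ t ∈ Icc a b, ∀ x ∉ K, Φ (t, x) = 0) :
    ContinuousOn (fun t => ∫ x, Φ (t, x) ∂μ) (Icc a b) := by
  obtain ⟨C, hC⟩ := exists_norm_le_indicator hΦ isCompact_Icc hK hvan
  intro t _
  refine continuousWithinAt_of_dominated (bound := K.indicator fun _ => C)
    (Eventually.of_forall fun s => (hΦ.comp (Continuous.prodMk_right s)).aestronglyMeasurable)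
    ?_ ((integrableOn_const hK.measure_lt_top.ne).integrable_indicator hK.measurableSet)
    (Eventually.of_forall fun x => (hΦ.comp (Continuous.prodMk_left x)).continuousWithinAt)
  filter_upwards [self_mem_nhdsWithin] with s hs
  exact Eventually.of_forall (hC s hs)

noncomputable def timeDeriv {F : Type*} [NormedAddCommGroup F] [NormedSpace ℝ F]
    (Φ : ℝ × F → ℝ) (p : ℝ × F) : ℝ :=
  fderiv ℝ Φ p (1, 0)

section TimeDerivative

variable {F : Type*} [NormedAddCommGroup F] [NormedSpace ℝ F] {Φ : ℝ × F → ℝ}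

lemma hasDerivAt_timeDeriv {t : ℝ} {x : F} (h : DifferentiableAt ℝ Φ (t, x)) :
    HasDerivAt (fun s => Φ (s, x)) (timeDeriv Φ (t, x)) t := by
  have hline : HasFDerivAt (fun s : ℝ => (s, x)) (ContinuousLinearMap.inl ℝ ℝ F) t :=
    (hasFDerivAt_id t).prodMk (hasFDerivAt_const x t)
  simpa [timeDeriv, Function.comp_def] using (h.hasFDerivAt.comp t hline).hasDerivAt

lemma continuous_timeDeriv (h : ContDiff ℝ 1 Φ) : Continuous (timeDeriv Φ) :=
  (h.continuous_fderiv one_ne_zero).clm_apply continuous_const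

lemma timeDeriv_eq_zero_of_forall_mem {U : Set (ℝ × F)} (hU : IsOpen U) (h : ∀ p ∈ U, Φ p = 0)
    {p : ℝ × F} (hp : p ∈ U) : timeDeriv Φ p = 0 := by
  have hev : Φ =ᶠ[𝓝 p] fun _ => 0 := eventually_of_mem (hU.mem_nhds hp) h
  simp [timeDeriv, hev.fderiv_eq]

variable [MeasurableSpace F] [BorelSpace F] {μ : Measure F} [IsFiniteMeasureOnCompacts μ]
  {K : Set F} {a b : ℝ}

lemma hasDerivAt_integral_of_forall_notMem_eq_zero (hΦ : ContDiff ℝ 1 Φ) (hK : IsCompact K)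
    (hvan : ∀ t ∈ Icc a b, ∀ x ∉ K, Φ (t, x) = 0) {t : ℝ} (ht : t ∈ Ioo a b) :
    HasDerivAt (fun t => ∫ x, Φ (t, x) ∂μ) (∫ x, timeDeriv Φ (t, x) ∂μ) t := by
  obtain ⟨ε, hε, hball⟩ := Metric.nhds_basis_closedBall.mem_iff.1 (isOpen_Ioo.mem_nhds ht)
  have hΦ' := continuous_timeDeriv hΦ
  have hvan' : ∀ s ∈ Metric.closedBall t ε, ∀ x ∉ K, timeDeriv Φ (s, x) = 0 :=
    fun s hs x hx => timeDeriv_eq_zero_of_forall_mem (isOpen_Ioo.prod hK.isClosed.isOpen_compl)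
      (fun q hq => hvan q.1 (Ioo_subset_Icc_self hq.1) q.2 hq.2) ⟨hball hs, hx⟩
  obtain ⟨C, hC⟩ := exists_norm_le_indicator hΦ' (isCompact_closedBall t ε) hK hvan'
  have hint : Integrable (fun x => Φ (t, x)) μ :=
    (hΦ.continuous.comp (Continuous.prodMk_right t)).integrable_of_hasCompactSupport
      (HasCompactSupport.intro hK (hvan t (Ioo_subset_Icc_self ht)))
  refine (hasDerivAt_integral_of_dominated_loc_of_deriv_le (Metric.closedBall_mem_nhds t hε)
    (Eventually.of_forall fun s =>
      (hΦ.continuous.comp (Continuous.prodMk_right s)).aestronglyMeasurable) hint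
    (hΦ'.comp (Continuous.prodMk_right t)).aestronglyMeasurable
    (Eventually.of_forall fun x s hs => hC s hs x)
    ((integrableOn_const hK.measure_lt_top.ne).integrable_indicator hK.measurableSet)
    (Eventually.of_forall fun x s _ =>
      hasDerivAt_timeDeriv ((hΦ.differentiable one_ne_zero) (s, x)))).2

theorem integral_eq_of_integral_timeDeriv_eq_zero (hΦ : ContDiff ℝ 1 Φ) (hK : IsCompact K)
    (hvan : ∀ t ∈ Icc a b, ∀ x ∉ K, Φ (t, x) = 0)
    (hzero : ∀ t ∈ Ioo a b, ∫ x, timeDeriv Φ (t, x) ∂μ = 0) :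
    ∀ t ∈ Icc a b, ∫ x, Φ (t, x) ∂μ = ∫ x, Φ (a, x) ∂μ := by
  intro t ht
  rcases ht.1.eq_or_lt with rfl | hat
  · rfl
  obtain ⟨c, hc, hslope⟩ := exists_hasDerivAt_eq_slope (fun t => ∫ x, Φ (t, x) ∂μ)
    (fun t => ∫ x, timeDeriv Φ (t, x) ∂μ) hat
    ((continuousOn_integral_of_forall_notMem_eq_zero hΦ.continuous hK hvan).mono
      (Icc_subset_Icc_right ht.2))
    (fun s hs => hasDerivAt_integral_of_forall_notMem_eq_zero hΦ hK hvan
      (Ioo_subset_Ioo_right ht.2 hs))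
  rw [hzero c (Ioo_subset_Ioo_right ht.2 hc), eq_comm, div_eq_zero_iff] at hslope
  exact sub_eq_zero.1 (hslope.resolve_right (sub_ne_zero.2 hat.ne'))

end TimeDerivative

lemma integrable_fderiv_apply {E : Type*} [NormedAddCommGroup E] [NormedSpace ℝ E]
    [MeasurableSpace E] [BorelSpace E] {μ : Measure E} [IsFiniteMeasureOnCompacts μ]
    {g : E → ℝ} (hg : ContDiff ℝ 1 g) (hcs : HasCompactSupport g) (v : E) :
    Integrable (fun x => fderiv ℝ g x v) μ :=
  ((hg.continuous_fderiv one_ne_zero).clm_apply continuous_const).integrable_of_hasCompactSupport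
    (hcs.fderiv_apply ℝ v)

lemma integral_fderiv_apply_eq_zero {E : Type*} [NormedAddCommGroup E] [NormedSpace ℝ E]
    [FiniteDimensional ℝ E] [MeasurableSpace E] [BorelSpace E] {μ : Measure E}
    [μ.IsAddHaarMeasure] {g : E → ℝ} (hg : ContDiff ℝ 1 g) (hcs : HasCompactSupport g) (v : E) :
    ∫ x, fderiv ℝ g x v ∂μ = 0 := by
  -- integration by parts against the constant function `1`
  simpa using integral_mul_fderiv_eq_neg_fderiv_mul_of_integrable (μ := μ)
    (f := fun _ => (1 : ℝ)) (g := g) (v := v) (by simp)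
    (by simpa using integrable_fderiv_apply hg hcs v)
    (by simpa using hg.continuous.integrable_of_hasCompactSupport hcs)
    (fun x _ => differentiableAt_const 1) (fun x _ => hg.differentiable one_ne_zero x)

section PartialDerivatives

variable {f g : (Fin 3 → ℝ) → ℝ} {x : Fin 3 → ℝ}

lemma integral_sum_pd_eq_zero {G : Fin 3 → (Fin 3 → ℝ) → ℝ} (hG : ∀ j, ContDiff ℝ 1 (G j))
    (hcs : ∀ j, HasCompactSupport (G j)) :
    ∫ x, ∑ j, pd j (G j) x = 0 := by
  rw [integral_finsetSum _ fun j _ =>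
    (integrable_fderiv_apply (hG j) (hcs j) _ : Integrable (pd j (G j)))]
  exact Finset.sum_eq_zero fun j _ => integral_fderiv_apply_eq_zero (hG j) (hcs j) _

lemma pd_mul (hf : DifferentiableAt ℝ f x) (hg : DifferentiableAt ℝ g x) (j : Fin 3) :
    pd j (fun y => f y * g y) x = pd j f x * g x + f x * pd j g x := by
  simp only [pd, fderiv_fun_mul hf hg, add_apply, smul_apply, smul_eq_mul]
  ring

lemma pd_sub (hf : DifferentiableAt ℝ f x) (hg : DifferentiableAt ℝ g x) (j : Fin 3) :
    pd j (fun y => f y - g y) x = pd j f x - pd j g x := by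
  simp [pd, fderiv_fun_sub hf hg]

lemma pd_sum {ι : Type*} {s : Finset ι} {F : ι → (Fin 3 → ℝ) → ℝ}
    (hF : ∀ i ∈ s, DifferentiableAt ℝ (F i) x) (j : Fin 3) :
    pd j (fun y => ∑ i ∈ s, F i y) x = ∑ i ∈ s, pd j (F i) x := by
  simp [pd, fderiv_fun_sum hF]

end PartialDerivatives

lemma timeDeriv_mul_trace {F ι : Type*} [NormedAddCommGroup F] [NormedSpace ℝ F] [Fintype ι]
    {ρ : ℝ → F → ℝ} {E : ℝ → F → ι → ι → ℝ} {t : ℝ} {x : F}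
    (hρ : DifferentiableAt ℝ (Function.uncurry ρ) (t, x))
    (hE : DifferentiableAt ℝ (Function.uncurry E) (t, x)) :
    timeDeriv (fun p => ρ p.1 p.2 * ∑ i, E p.1 p.2 i i) (t, x)
      = deriv (fun s => ρ s x) t * ∑ i, E t x i i + ρ t x * ∑ i, deriv (fun s => E s x i i) t := by
  have hEii : ∀ i, DifferentiableAt ℝ (fun p : ℝ × F => E p.1 p.2 i i) (t, x) :=
    fun i => differentiableAt_pi.1 (differentiableAt_pi.1 hE i) i
  have hρt := (hasDerivAt_timeDeriv hρ).differentiableAt.hasDerivAt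
  have hEt := fun i => (hasDerivAt_timeDeriv (hEii i)).differentiableAt.hasDerivAt
  exact (hasDerivAt_timeDeriv (hρ.mul (DifferentiableAt.fun_sum fun i _ => hEii i))).unique
    (hρt.mul (HasDerivAt.fun_sum fun i _ => hEt i))

-- `traceFlux ρ u E j = (ρ ((I + E) u - (tr E) u))_j`
noncomputable def traceFlux (ρ : (Fin 3 → ℝ) → ℝ) (u : (Fin 3 → ℝ) → Fin 3 → ℝ)
    (E : (Fin 3 → ℝ) → Fin 3 → Fin 3 → ℝ) (j : Fin 3) (y : Fin 3 → ℝ) : ℝ :=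
  ∑ i, ρ y * ((if i = j then 1 else 0) + E y j i) * u y i - ρ y * u y j * ∑ i, E y i i

section TraceFlux

variable {ρ : (Fin 3 → ℝ) → ℝ} {u : (Fin 3 → ℝ) → Fin 3 → ℝ} {E : (Fin 3 → ℝ) → Fin 3 → Fin 3 → ℝ}

lemma contDiff_traceFlux {n : WithTop ℕ∞} (hρ : ContDiff ℝ n ρ) (hu : ContDiff ℝ n u)
    (hE : ContDiff ℝ n E) (j : Fin 3) : ContDiff ℝ n (traceFlux ρ u E j) := by
  have hui := contDiff_pi.1 hu
  have hEij := fun i => contDiff_pi.1 (contDiff_pi.1 hE i)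
  exact (ContDiff.sum fun i _ => (hρ.mul (contDiff_const.add (hEij j i))).mul (hui i)).sub
    ((hρ.mul (hui j)).mul (ContDiff.sum fun i _ => hEij i i))

lemma hasCompactSupport_traceFlux {K : Set (Fin 3 → ℝ)} (hK : IsCompact K)
    (hu : ∀ x ∉ K, u x = 0) (j : Fin 3) : HasCompactSupport (traceFlux ρ u E j) :=
  HasCompactSupport.intro hK fun x hx => by simp [traceFlux, hu x hx]

lemma sum_pd_traceFlux {x : Fin 3 → ℝ} (hρ : DifferentiableAt ℝ ρ x)
    (hu : DifferentiableAt ℝ u x) (hE : DifferentiableAt ℝ E x) :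
    ∑ j, pd j (traceFlux ρ u E j) x
      = ∑ i, (∑ j, pd j (fun y => ρ y * ((if i = j then 1 else 0) + E y j i)) x) * u x i
        + ∑ i, ∑ j, ρ x * ((if i = j then 1 else 0) + E x j i) * pd j (fun y => u y i) x
        - (∑ j, pd j (fun y => ρ y * u y j) x) * ∑ i, E x i i
        - ρ x * ∑ j, u x j * ∑ i, pd j (fun y => E y i i) x := by
  have hui := differentiableAt_pi.1 hu
  have hEij := fun i => differentiableAt_pi.1 (differentiableAt_pi.1 hE i)
  have hM : ∀ i j, DifferentiableAt ℝ (fun y => ρ y * ((if i = j then 1 else 0) + E y j i)) x :=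
    fun i j => hρ.fun_mul ((hEij j i).const_add _)
  have htr : DifferentiableAt ℝ (fun y => ∑ i, E y i i) x :=
    DifferentiableAt.fun_sum fun i _ => hEij i i
  have hj : ∀ j, pd j (traceFlux ρ u E j) x
      = ∑ i, (pd j (fun y => ρ y * ((if i = j then 1 else 0) + E y j i)) x * u x i
          + ρ x * ((if i = j then 1 else 0) + E x j i) * pd j (fun y => u y i) x)
        - (pd j (fun y => ρ y * u y j) x * ∑ i, E x i i
          + ρ x * u x j * ∑ i, pd j (fun y => E y i i) x) := by
    intro j
    unfold traceFlux
    rw [pd_sub (DifferentiableAt.fun_sum fun i _ => (hM i j).fun_mul (hui i))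
        ((hρ.fun_mul (hui j)).fun_mul htr), pd_sum (fun i _ => (hM i j).fun_mul (hui i)),
      pd_mul (hρ.fun_mul (hui j)) htr, pd_sum fun i _ => hEij i i]
    simp only [pd_mul (hM _ j) (hui _)]
  simp only [hj, Fin.sum_univ_three]
  ring

end TraceFlux

lemma timeDeriv_mul_trace_eq_sum_pd_traceFlux {ρ : ℝ → (Fin 3 → ℝ) → ℝ}
    {u : ℝ → (Fin 3 → ℝ) → Fin 3 → ℝ} {E : ℝ → (Fin 3 → ℝ) → Fin 3 → Fin 3 → ℝ}
    (hρ : ContDiff ℝ 1 (Function.uncurry ρ)) (hu : ContDiff ℝ 1 (Function.uncurry u))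
    (hE : ContDiff ℝ 1 (Function.uncurry E)) {t : ℝ} {x : Fin 3 → ℝ}
    (hmass : deriv (fun s => ρ s x) t + ∑ j, pd j (fun y => ρ t y * u t y j) x = 0)
    (hEeq : ∀ i, deriv (fun s => E s x i i) t + ∑ k, u t x k * pd k (fun y => E t y i i) x
      = (∑ k, pd k (fun y => u t y i) x * E t x k i) + pd i (fun y => u t y i) x)
    (hconstraint : ∀ i,
      ∑ j, pd j (fun y => ρ t y * ((if i = j then (1 : ℝ) else 0) + E t y j i)) x = 0) :
    timeDeriv (fun p => ρ p.1 p.2 * ∑ i, E p.1 p.2 i i) (t, x)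
      = ∑ j, pd j (traceFlux (ρ t) (u t) (E t) j) x := by
  rw [timeDeriv_mul_trace (hρ.differentiable one_ne_zero _) (hE.differentiable one_ne_zero _),
    sum_pd_traceFlux ((hρ.of_uncurry_left t).differentiable one_ne_zero x)
      ((hu.of_uncurry_left t).differentiable one_ne_zero x)
      ((hE.of_uncurry_left t).differentiable one_ne_zero x)]
  simp only [hconstraint, zero_mul, Finset.sum_const_zero, zero_add]
  have hE0 := hEeq 0
  have hE1 := hEeq 1
  have hE2 := hEeq 2
  simp only [Fin.sum_univ_three] at hmass hE0 hE1 hE2 ⊢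
  simp only [Fin.isValue, Fin.reduceEq, reduceIte]
  linear_combination (E t x 0 0 + E t x 1 1 + E t x 2 2) * hmass + ρ t x * (hE0 + hE1 + hE2)

theorem conservation_of_rho_trace_E_general
    (T : ℝ)
    (ρ : ℝ → (Fin 3 → ℝ) → ℝ)
    (u : ℝ → (Fin 3 → ℝ) → Fin 3 → ℝ)
    (E : ℝ → (Fin 3 → ℝ) → Fin 3 → Fin 3 → ℝ)
    (hρ : ContDiff ℝ 1 (Function.uncurry ρ))
    (hu : ContDiff ℝ 1 (Function.uncurry u))
    (hE : ContDiff ℝ 1 (Function.uncurry E))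
    (hmass : ∀ t ∈ Set.Icc (0 : ℝ) T, ∀ x : Fin 3 → ℝ,
      deriv (fun s => ρ s x) t + ∑ j, pd j (fun y => ρ t y * u t y j) x = 0)
    (hEeq : ∀ t ∈ Set.Icc (0 : ℝ) T, ∀ x : Fin 3 → ℝ, ∀ i j : Fin 3,
      deriv (fun s => E s x i j) t + ∑ k, u t x k * pd k (fun y => E t y i j) x
        = (∑ k, pd k (fun y => u t y i) x * E t x k j) + pd j (fun y => u t y i) x)
    (hconstraint : ∀ t ∈ Set.Icc (0 : ℝ) T, ∀ x : Fin 3 → ℝ, ∀ i : Fin 3,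
      ∑ j, pd j (fun y => ρ t y * ((if i = j then (1 : ℝ) else 0) + E t y j i)) x = 0)
    (hsupp : ∃ K : Set (Fin 3 → ℝ), IsCompact K ∧ ∀ t ∈ Set.Icc (0 : ℝ) T, ∀ x ∉ K,
      u t x = 0 ∧ (∀ i j : Fin 3, E t x i j = 0)) :
    ∀ t ∈ Set.Icc (0 : ℝ) T,
      ∫ x : Fin 3 → ℝ, ρ t x * ∑ i, E t x i i
        = ∫ x : Fin 3 → ℝ, ρ 0 x * ∑ i, E 0 x i i := by
  obtain ⟨K, hK, hKsupp⟩ := hsupp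
  refine integral_eq_of_integral_timeDeriv_eq_zero (Φ := fun p => ρ p.1 p.2 * ∑ i, E p.1 p.2 i i)
    (hρ.mul (ContDiff.sum fun i _ => contDiff_pi.1 (contDiff_pi.1 hE i) i)) hK
    (fun t ht x hx => by simp [(hKsupp t ht x hx).2]) fun t ht => ?_
  have ht' := Ioo_subset_Icc_self ht
  calc ∫ x, timeDeriv (fun p => ρ p.1 p.2 * ∑ i, E p.1 p.2 i i) (t, x)
      = ∫ x, ∑ j, pd j (traceFlux (ρ t) (u t) (E t) j) x :=
        integral_congr_ae <| Eventually.of_forall fun x =>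
          timeDeriv_mul_trace_eq_sum_pd_traceFlux hρ hu hE (hmass t ht' x)
            (fun i => hEeq t ht' x i i) (hconstraint t ht' x)
    _ = 0 := integral_sum_pd_eq_zero
        (contDiff_traceFlux (hρ.of_uncurry_left t) (hu.of_uncurry_left t) (hE.of_uncurry_left t))
        (hasCompactSupport_traceFlux hK fun x hx => (hKsupp t ht' x hx).1)

/-- **Conservation law (7.6).** If `ρ` (bounded), `u`, `E` are `C¹`, satisfy the continuity
equation, the equation `∂_t E + u·∇E = ∇u E + ∇u`, and the constraint `div(ρ(I+E)ᵀ) = 0`, and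
`u(t,·)`, `E(t,·)` vanish outside a fixed compact set, then `∫ ρ tr E dx` is conserved. -/
theorem conservation_of_rho_trace_E
    (T : ℝ) (hT : 0 < T)
    (ρ : ℝ → (Fin 3 → ℝ) → ℝ)
    (u : ℝ → (Fin 3 → ℝ) → Fin 3 → ℝ)
    (E : ℝ → (Fin 3 → ℝ) → Fin 3 → Fin 3 → ℝ)
    (hρ : ContDiff ℝ 1 (Function.uncurry ρ))
    (hu : ContDiff ℝ 1 (Function.uncurry u))
    (hE : ContDiff ℝ 1 (Function.uncurry E))
    (hρbdd : ∃ C : ℝ, ∀ t ∈ Set.Icc (0 : ℝ) T, ∀ x : Fin 3 → ℝ, |ρ t x| ≤ C)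
    (hmass : ∀ t ∈ Set.Icc (0 : ℝ) T, ∀ x : Fin 3 → ℝ,
      deriv (fun s => ρ s x) t + ∑ j, pd j (fun y => ρ t y * u t y j) x = 0)
    (hEeq : ∀ t ∈ Set.Icc (0 : ℝ) T, ∀ x : Fin 3 → ℝ, ∀ i j : Fin 3,
      deriv (fun s => E s x i j) t + ∑ k, u t x k * pd k (fun y => E t y i j) x
        = (∑ k, pd k (fun y => u t y i) x * E t x k j) + pd j (fun y => u t y i) x)
    (hconstraint : ∀ t ∈ Set.Icc (0 : ℝ) T, ∀ x : Fin 3 → ℝ, ∀ i : Fin 3,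
      ∑ j, pd j (fun y => ρ t y * ((if i = j then (1 : ℝ) else 0) + E t y j i)) x = 0)
    (hsupp : ∃ K : Set (Fin 3 → ℝ), IsCompact K ∧ ∀ t ∈ Set.Icc (0 : ℝ) T, ∀ x ∉ K,
      u t x = 0 ∧ (∀ i j : Fin 3, E t x i j = 0)) :
    ∀ t ∈ Set.Icc (0 : ℝ) T,
      ∫ x : Fin 3 → ℝ, ρ t x * ∑ i, E t x i i
        = ∫ x : Fin 3 → ℝ, ρ 0 x * ∑ i, E 0 x i i :=
  conservation_of_rho_trace_E_general T ρ u E hρ hu hE hmass hEeq hconstraint hsupp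
end
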